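/- arXiv:1711.04108 — 2 statements merged into one kernel-verified Lean document; each statement's English description precedes it below -/
import Mathlib

section
/- Let I be a nonempty finite set, d ∈ ℕ^I a nonzero vector, and θ ∈ ℝ^I. Then there exists an integral weight ω ∈ ℤ^I such that for every nonzero e ∈ ℕ^I with e_i ≤ d_i for all i ∈ I, one has sgn(μ_ω(d) − μ_ω(e)) = sgn(μ_θ(d) − μ_θ(e)). (This is the statement that every facet of ℝ^I with respect to the hyperplane arrangement ℋ(d) contains an integral weight, expressed via the sign characterization of facets.) -/
/-- The slope `μ_θ(d)` of a dimension vector `d ∈ ℕ^I` with respect to a weight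
`θ ∈ ℝ^I`: `μ_θ(d) = (∑ i, θ i * d i) / (∑ i, d i)`. -/
noncomputable def muSlopeVec {I : Type*} [Fintype I] (θ : I → ℝ) (d : I → ℕ) : ℝ :=
  (∑ i, θ i * (d i : ℝ)) / (∑ i, (d i : ℝ))

/-!
After multiplying by the positive denominators, `μ_x(d) − μ_x(e)` has the sign of a linear
form in `x` with rational coefficients, and only finitely many `e ≤ d` occur. So it suffices to
find an integral point with the same sign pattern as `θ` with respect to finitely many rational
linear forms. Write `θ i = ∑ k, q i k * b k` over a `ℚ`-basis `b` of the `ℚ`-span of the `θ i`,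
and replace `b` by a nearby rational vector `r`. The rational point `i ↦ ∑ k, q i k * r k`
satisfies every rational linear relation of `θ`, so the forms vanishing at `θ` still vanish, and
it is close to `θ`, so the other forms keep their signs. Clearing denominators by a positive
integer then gives `ω`.
-/

open Filter Topology

namespace Real

lemma sign_mul_of_pos_left {a : ℝ} (ha : 0 < a) (x : ℝ) : sign (a * x) = sign x := by
  rcases lt_trichotomy x 0 with hx | rfl | hx
  · rw [sign_of_neg hx, sign_of_neg (mul_neg_of_pos_of_neg ha hx)]
  · rw [mul_zero]
  · rw [sign_of_pos hx, sign_of_pos (mul_pos ha hx)]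

lemma sign_div_of_pos {a : ℝ} (ha : 0 < a) (x : ℝ) : sign (x / a) = sign x := by
  rw [div_eq_inv_mul, sign_mul_of_pos_left (inv_pos.2 ha)]

lemma eventually_sign_eq {x : ℝ} (hx : x ≠ 0) : ∀ᶠ y in 𝓝 x, sign y = sign x := by
  rcases hx.lt_or_gt with hx | hx
  · filter_upwards [eventually_lt_nhds hx] with y hy
    rw [sign_of_neg hy, sign_of_neg hx]
  · filter_upwards [eventually_gt_nhds hx] with y hy
    rw [sign_of_pos hy, sign_of_pos hx]

end Real

section RationalApproximation

variable {I : Type*} [Fintype I]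

theorem exists_rat_mem_nhds_preserving_rat_relations (θ : I → ℝ) {U : Set (I → ℝ)}
    (hU : U ∈ 𝓝 θ) :
    ∃ q : I → ℚ, (fun i => (q i : ℝ)) ∈ U ∧
      ∀ c : I → ℚ, ∑ i, (c i : ℝ) * θ i = 0 → ∑ i, c i * q i = 0 := by
  set V := Submodule.span ℚ (Set.range θ)
  have : FiniteDimensional ℚ V := FiniteDimensional.span_of_finite ℚ (Set.finite_range θ)
  let b := Module.Free.chooseBasis ℚ V
  let θV : I → V := fun i => ⟨θ i, Submodule.subset_span ⟨i, rfl⟩⟩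
  let Φ : (Module.Free.ChooseBasisIndex ℚ V → ℝ) → I → ℝ :=
    fun t i => ∑ k, (b.equivFun (θV i) k : ℝ) * t k
  have hΦb : Φ (fun k => b k) = θ := by
    ext i
    have h := congrArg Subtype.val (b.sum_equivFun (θV i))
    rw [Submodule.coe_sum] at h
    simp only [Submodule.coe_smul, Rat.smul_def] at h
    exact h
  have hΦU : Φ ⁻¹' U ∈ 𝓝 (fun k => (b k : ℝ)) :=
    (by fun_prop : Continuous Φ).continuousAt.preimage_mem_nhds (hΦb ▸ hU)
  obtain ⟨r, hr⟩ := (DenseRange.piMap fun _ => Rat.denseRange_cast).mem_nhds hΦU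
  let f : V →ₗ[ℚ] ℚ := b.constr ℚ r
  refine ⟨fun i => f (θV i), by simpa [f, Φ] using hr, fun c hc => ?_⟩
  have hcV : ∑ i, c i • θV i = 0 := by
    ext
    simpa [Rat.smul_def] using hc
  simpa [map_sum] using congrArg f hcV

theorem exists_pos_nat_mul_eq_int (q : I → ℚ) :
    ∃ N : ℕ, 0 < N ∧ ∃ z : I → ℤ, ∀ i, (z i : ℚ) = N * q i := by
  set N := ∏ i, (q i).den
  refine ⟨N, Finset.prod_pos fun i _ => (q i).den_pos,
    fun i => (q i).num * ((N / (q i).den : ℕ) : ℤ), fun i => ?_⟩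
  have hdvd : (q i).den ∣ N := Finset.dvd_prod_of_mem _ (Finset.mem_univ i)
  rw [Int.cast_mul, Int.cast_natCast, Nat.cast_div hdvd (by exact_mod_cast (q i).den_nz),
    ← Rat.mul_den_eq_num]
  field_simp

theorem exists_int_sign_eq_of_finite (θ : I → ℝ) {C : Set (I → ℚ)} (hC : C.Finite) :
    ∃ ω : I → ℤ, ∀ c ∈ C,
      Real.sign (∑ i, (c i : ℝ) * ω i) = Real.sign (∑ i, (c i : ℝ) * θ i) := by
  have hU : ∀ᶠ x in 𝓝 θ, ∀ c ∈ C, ∑ i, (c i : ℝ) * θ i ≠ 0 →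
      Real.sign (∑ i, (c i : ℝ) * x i) = Real.sign (∑ i, (c i : ℝ) * θ i) := by
    refine hC.eventually_all.2 fun c _ => ?_
    by_cases h : ∑ i, (c i : ℝ) * θ i = 0
    · exact Eventually.of_forall fun _ h' => absurd h h'
    have hcont : Continuous fun x : I → ℝ => ∑ i, (c i : ℝ) * x i := by fun_prop
    exact ((hcont.tendsto θ).eventually (Real.eventually_sign_eq h)).mono fun _ hx _ => hx
  obtain ⟨q, hqU, hrel⟩ := exists_rat_mem_nhds_preserving_rat_relations θ hU
  obtain ⟨N, hN, z, hz⟩ := exists_pos_nat_mul_eq_int q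
  refine ⟨z, fun c hc => ?_⟩
  have hzq : ∑ i, (c i : ℝ) * z i = N * ∑ i, (c i : ℝ) * q i := by
    have hzi : ∀ i, (z i : ℝ) = N * q i := fun i => by exact_mod_cast hz i
    simp only [hzi, Finset.mul_sum]
    exact Finset.sum_congr rfl fun i _ => by ring
  rw [hzq, Real.sign_mul_of_pos_left (by exact_mod_cast hN)]
  by_cases h : ∑ i, (c i : ℝ) * θ i = 0
  · rw [h, show ∑ i, (c i : ℝ) * q i = 0 by exact_mod_cast hrel c h]
  · exact hqU c hc h

end RationalApproximation

section Slope

variable {I : Type*} [Fintype I]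

def slopeForm (d e : I → ℕ) : I → ℚ :=
  fun i => d i * ∑ j, (e j : ℚ) - e i * ∑ j, (d j : ℚ)

lemma sum_natCast_pos_of_ne_zero {e : I → ℕ} (he : e ≠ 0) : 0 < ∑ i, (e i : ℝ) := by
  obtain ⟨i, hi⟩ := Function.ne_iff.1 he
  exact Finset.sum_pos' (fun j _ => Nat.cast_nonneg _)
    ⟨i, Finset.mem_univ i, Nat.cast_pos.2 (Nat.pos_of_ne_zero hi)⟩

lemma muSlopeVec_sub_eq (x : I → ℝ) {d e : I → ℕ} (hd : d ≠ 0) (he : e ≠ 0) :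
    muSlopeVec x d - muSlopeVec x e =
      (∑ i, (slopeForm d e i : ℝ) * x i) / ((∑ i, (d i : ℝ)) * ∑ i, (e i : ℝ)) := by
  rw [muSlopeVec, muSlopeVec, div_sub_div _ _ (sum_natCast_pos_of_ne_zero hd).ne'
    (sum_natCast_pos_of_ne_zero he).ne']
  congr 1
  have hterm : ∀ i, (slopeForm d e i : ℝ) * x i =
      x i * d i * ∑ j, (e j : ℝ) - (∑ j, (d j : ℝ)) * (x i * e i) := fun i => by
    simp only [slopeForm]
    push_cast
    ring
  simp only [hterm, Finset.sum_sub_distrib, ← Finset.sum_mul, ← Finset.mul_sum]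

lemma sign_muSlopeVec_sub (x : I → ℝ) {d e : I → ℕ} (hd : d ≠ 0) (he : e ≠ 0) :
    Real.sign (muSlopeVec x d - muSlopeVec x e) =
      Real.sign (∑ i, (slopeForm d e i : ℝ) * x i) := by
  rw [muSlopeVec_sub_eq x hd he, Real.sign_div_of_pos
    (mul_pos (sum_natCast_pos_of_ne_zero hd) (sum_natCast_pos_of_ne_zero he))]

end Slope

theorem exists_integral_weight_in_facet_general
    {I : Type*} [Fintype I] (d : I → ℕ) (hd : d ≠ 0) (θ : I → ℝ) :
    ∃ ω : I → ℤ, ∀ e : I → ℕ, e ≠ 0 → (∀ i, e i ≤ d i) →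
      Real.sign (muSlopeVec (fun i => (ω i : ℝ)) d - muSlopeVec (fun i => (ω i : ℝ)) e) =
        Real.sign (muSlopeVec θ d - muSlopeVec θ e) := by
  classical
  obtain ⟨ω, hω⟩ := exists_int_sign_eq_of_finite θ ((Set.finite_Iic d).image (slopeForm d))
  refine ⟨ω, fun e he hle => ?_⟩
  rw [sign_muSlopeVec_sub _ hd he, sign_muSlopeVec_sub _ hd he]
  exact hω _ ⟨e, hle, rfl⟩

/-- for every nonzero `d ∈ ℕ^I` and every `θ ∈ ℝ^I` there exists an
integral weight `ω ∈ ℤ^I` such that for every nonzero `e ∈ ℕ^I` with `e ≤ d` one has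
`sgn(μ_ω(d) − μ_ω(e)) = sgn(μ_θ(d) − μ_θ(e))`: every facet of the hyperplane arrangement
`ℋ(d)` contains an integral weight. -/
theorem exists_integral_weight_in_facet
    {I : Type*} [Fintype I] [Nonempty I] (d : I → ℕ) (hd : d ≠ 0) (θ : I → ℝ) :
    ∃ ω : I → ℤ, ∀ e : I → ℕ, e ≠ 0 → (∀ i, e i ≤ d i) →
      Real.sign (muSlopeVec (fun i => (ω i : ℝ)) d - muSlopeVec (fun i => (ω i : ℝ)) e) =
        Real.sign (muSlopeVec θ d - muSlopeVec θ e) :=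
  exists_integral_weight_in_facet_general d hd θ
end

section
/- Let ℬ = {ρ ∈ 𝒜 : (V,ρ) is Schur}. Then ℬ is open in 𝒜, the stabilizer in G of every point of ℬ equals H, and the induced action of the quotient complex Lie group Ḡ = G/H on ℬ is principal: the induced action of Ḡ on ℬ is free, and the map τ : ℬ × Ḡ → ℬ × ℬ, (ρ, ḡ) ↦ (ρ, ρḡ), is a homeomorphism onto its image (equivalently, for every ρ ∈ ℬ and every H-invariant neighbourhood W of the identity e in G there is a neighbourhood U of ρ in ℬ with P_G(U,U) ⊆ W). -/
/-!
The argument runs through the spaces of intertwiners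
`{f ∈ ∏ₐ End(V a) | σ_α ∘ f_{s α} = f_{t α} ∘ τ_α for all α}`, whose graph over `(σ, τ)` is closed,
and which for `σ = τ = ρ` Schur is the line `ℂ·1`; moreover `τ = σ g` iff `g` intertwines `σ` and
`τ`. Choosing a complement `C` of `ℂ·1`, `ρ` is Schur iff no unit vector of `C` intertwines `ρ`
with itself, an open condition since the unit sphere of `C` is compact. For principality, take
the open cone `ℂ*·W₁` over a neighbourhood `W₁ ⊆ W` of `1`: the unit sphere outside the cone is
compact and contains no intertwiner of `(ρ, ρ)`, hence none of `(σ, τ)` near `(ρ, ρ)`; so if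
`σ` and `σ g` are near `ρ`, then `g` lies in the cone, i.e. in `H·W = W`.
-/

open Module

variable {Q₀ Q₁ : Type*} [Fintype Q₀] [Fintype Q₁]
  (s t : Q₁ → Q₀)
  (V : Q₀ → Type*) [∀ a, NormedAddCommGroup (V a)] [∀ a, InnerProductSpace ℂ (V a)]
  [∀ a, FiniteDimensional ℂ (V a)]

/-- The representation `ρ ∈ 𝒜` is Schur: every endomorphism of `(V, ρ)` is a scalar
multiple of the identity. -/
def IsSchurPoint (ρ : ∀ α, V (s α) →L[ℂ] V (t α)) : Prop :=
  ∀ f : ∀ a, V a →ₗ[ℂ] V a,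
    (∀ α, (f (t α)) ∘ₗ (ρ α : V (s α) →ₗ[ℂ] V (t α)) =
      (ρ α : V (s α) →ₗ[ℂ] V (t α)) ∘ₗ (f (s α))) →
    ∃ c : ℂ, ∀ a, f a = c • LinearMap.id

/-- The right action of `G = ∏ₐ GL(V a)` on `𝒜`: `(ρ g)_α = g_{t α}⁻¹ ∘ ρ_α ∘ g_{s α}`. -/
noncomputable def actG (ρ : ∀ α, V (s α) →L[ℂ] V (t α)) (g : ∀ a, V a ≃ₗ[ℂ] V a) :
    ∀ α, V (s α) →L[ℂ] V (t α) :=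
  fun α => LinearMap.toContinuousLinearMap
    ((g (t α)).symm.toLinearMap ∘ₗ (ρ α : V (s α) →ₗ[ℂ] V (t α)) ∘ₗ (g (s α)).toLinearMap)

/-- The embedding of `G = ∏ₐ GL(V a)` into the topological space `∏ₐ (V a →L[ℂ] V a)`,
which induces the topology of `G`. -/
noncomputable def glEmbed (g : ∀ a, V a ≃ₗ[ℂ] V a) : ∀ a, V a →L[ℂ] V a :=
  fun a => LinearMap.toContinuousLinearMap (g a).toLinearMap

open Topology Pointwise

section Intertwiners

variable {Q₀ Q₁ : Type*} (s t : Q₁ → Q₀) (V : Q₀ → Type*)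
  [∀ a, NormedAddCommGroup (V a)] [∀ a, NormedSpace ℂ (V a)]

def intertwiners (σ τ : ∀ α, V (s α) →L[ℂ] V (t α)) : Submodule ℂ (∀ a, V a →L[ℂ] V a) where
  carrier := {f | ∀ α, (σ α).comp (f (s α)) = (f (t α)).comp (τ α)}
  add_mem' {f g} hf hg α := by
    simp only [Pi.add_apply, ContinuousLinearMap.comp_add, ContinuousLinearMap.add_comp, hf α,
      hg α]
  zero_mem' α := by simp
  smul_mem' c f hf α := by
    simp only [Pi.smul_apply, ContinuousLinearMap.comp_smul, ContinuousLinearMap.smul_comp, hf α]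

variable {s t V}

theorem mem_intertwiners {σ τ : ∀ α, V (s α) →L[ℂ] V (t α)} {f : ∀ a, V a →L[ℂ] V a} :
    f ∈ intertwiners s t V σ τ ↔ ∀ α, (σ α).comp (f (s α)) = (f (t α)).comp (τ α) :=
  Iff.rfl

theorem one_mem_intertwiners (ρ : ∀ α, V (s α) →L[ℂ] V (t α)) :
    (1 : ∀ a, V a →L[ℂ] V a) ∈ intertwiners s t V ρ ρ := fun α => by
  simp only [Pi.one_apply, ContinuousLinearMap.one_def, ContinuousLinearMap.comp_id,
    ContinuousLinearMap.id_comp]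

variable (s t V)

theorem isClosed_setOf_mem_intertwiners :
    IsClosed {p : ((∀ α, V (s α) →L[ℂ] V (t α)) × (∀ α, V (s α) →L[ℂ] V (t α))) ×
      (∀ a, V a →L[ℂ] V a) | p.2 ∈ intertwiners s t V p.1.1 p.1.2} := by
  simp only [mem_intertwiners, Set.ofPred_forall]
  exact isClosed_iInter fun α => isClosed_eq (by fun_prop) (by fun_prop)

end Intertwiners

theorem inv_norm_smul_mem_sphere {E : Type*} [NormedAddCommGroup E] [NormedSpace ℂ E] {f : E}
    (hf : f ≠ 0) : (‖f‖ : ℂ)⁻¹ • f ∈ Metric.sphere 0 1 := by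
  rw [mem_sphere_zero_iff_norm, norm_smul, norm_inv, Complex.norm_real, norm_norm,
    inv_mul_cancel₀ (norm_ne_zero_iff.mpr hf)]

section Schur

variable {Q₀ Q₁ : Type*} {s t : Q₁ → Q₀} {V : Q₀ → Type*}
  [∀ a, NormedAddCommGroup (V a)] [∀ a, InnerProductSpace ℂ (V a)]
  [∀ a, FiniteDimensional ℂ (V a)]

theorem isSchurPoint_iff_intertwiners_le (ρ : ∀ α, V (s α) →L[ℂ] V (t α)) :
    IsSchurPoint s t V ρ ↔ intertwiners s t V ρ ρ ≤ ℂ ∙ 1 := by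
  simp only [SetLike.le_def, Submodule.mem_span_singleton, mem_intertwiners]
  constructor
  · intro hρ f hf
    obtain ⟨c, hc⟩ := hρ (fun a => f a) fun α => by
      ext x
      exact (ContinuousLinearMap.ext_iff.mp (hf α) x).symm
    refine ⟨c, funext fun a => ?_⟩
    ext x
    simpa using (LinearMap.congr_fun (hc a) x).symm
  · intro hρ f hf
    obtain ⟨c, hc⟩ := @hρ (fun a => LinearMap.toContinuousLinearMap (f a)) fun α => by
      ext x
      exact (LinearMap.ext_iff.mp (hf α) x).symm
    refine ⟨c, fun a => ?_⟩
    ext x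
    simpa using (ContinuousLinearMap.ext_iff.mp (congrFun hc a) x).symm

theorem IsSchurPoint.exists_smul_one_eq {ρ : ∀ α, V (s α) →L[ℂ] V (t α)}
    (hρ : IsSchurPoint s t V ρ) {f : ∀ a, V a →L[ℂ] V a} (hf : f ∈ intertwiners s t V ρ ρ) :
    ∃ c : ℂ, c • 1 = f :=
  Submodule.mem_span_singleton.mp ((isSchurPoint_iff_intertwiners_le ρ).mp hρ hf)

theorem isSchurPoint_iff_disjoint {C : Submodule ℂ (∀ a, V a →L[ℂ] V a)}
    (hC : IsCompl (ℂ ∙ 1) C) (ρ : ∀ α, V (s α) →L[ℂ] V (t α)) :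
    IsSchurPoint s t V ρ ↔ Disjoint (intertwiners s t V ρ ρ) C := by
  rw [isSchurPoint_iff_intertwiners_le]
  refine ⟨fun h => hC.disjoint.mono_left h, fun h => le_of_eq ?_⟩
  have hone : ℂ ∙ (1 : ∀ a, V a →L[ℂ] V a) ≤ intertwiners s t V ρ ρ :=
    (Submodule.span_singleton_le_iff_mem _ _).mpr (one_mem_intertwiners ρ)
  calc intertwiners s t V ρ ρ = ((ℂ ∙ 1) ⊔ C) ⊓ intertwiners s t V ρ ρ := by
        rw [hC.sup_eq_top, top_inf_eq]
    _ = ℂ ∙ 1 := by rw [sup_inf_assoc_of_le _ hone, h.symm.eq_bot, sup_bot_eq]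

@[simp]
theorem coe_glEmbed_apply (g : ∀ a, V a ≃ₗ[ℂ] V a) (a : Q₀) :
    (glEmbed V g a : V a →ₗ[ℂ] V a) = (g a).toLinearMap :=
  rfl

theorem glEmbed_refl : glEmbed V (fun a => LinearEquiv.refl ℂ (V a)) = 1 :=
  rfl

theorem glEmbed_eq_smul_iff {g g' : ∀ a, V a ≃ₗ[ℂ] V a} {c : ℂ} :
    glEmbed V g' = c • glEmbed V g ↔ ∀ a, (g' a).toLinearMap = c • (g a).toLinearMap := by
  simp only [funext_iff, Pi.smul_apply, ← ContinuousLinearMap.coe_inj,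
    ContinuousLinearMap.toLinearMap_smul, coe_glEmbed_apply]

theorem glEmbed_eq_smul_one_iff {g : ∀ a, V a ≃ₗ[ℂ] V a} {c : ℂ} :
    glEmbed V g = c • 1 ↔ ∀ a, (g a).toLinearMap = c • LinearMap.id := by
  rw [← glEmbed_refl, glEmbed_eq_smul_iff]
  rfl

theorem isUnit_glEmbed (g : ∀ a, V a ≃ₗ[ℂ] V a) : IsUnit (glEmbed V g) :=
  ⟨⟨glEmbed V g, glEmbed V fun a => (g a).symm, by ext; simp [glEmbed], by ext; simp [glEmbed]⟩,
    rfl⟩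

theorem exists_glEmbed_eq_smul (g : ∀ a, V a ≃ₗ[ℂ] V a) (c : ℂˣ) :
    ∃ g', glEmbed V g' = c • glEmbed V g :=
  ⟨fun a => (g a).trans (LinearEquiv.smulOfNeZero ℂ (V a) c c.ne_zero), by
    ext; simp [glEmbed, Units.smul_def]⟩

theorem actG_eq_iff_mem_intertwiners {σ τ : ∀ α, V (s α) →L[ℂ] V (t α)}
    {g : ∀ a, V a ≃ₗ[ℂ] V a} :
    actG s t V σ g = τ ↔ glEmbed V g ∈ intertwiners s t V σ τ := by
  simp only [funext_iff, mem_intertwiners, ContinuousLinearMap.ext_iff]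
  refine forall_congr' fun α => forall_congr' fun x => ?_
  simp [actG, glEmbed, LinearEquiv.symm_apply_eq]

theorem IsSchurPoint.actG_eq_self_iff [Nontrivial (∀ a, V a →L[ℂ] V a)]
    {ρ : ∀ α, V (s α) →L[ℂ] V (t α)} (hρ : IsSchurPoint s t V ρ) (g : ∀ a, V a ≃ₗ[ℂ] V a) :
    actG s t V ρ g = ρ ↔
      ∃ c : ℂ, c ≠ 0 ∧ ∀ a, (g a).toLinearMap = c • (LinearMap.id : V a →ₗ[ℂ] V a) := by
  simp_rw [← glEmbed_eq_smul_one_iff, actG_eq_iff_mem_intertwiners]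
  constructor
  · intro hg
    obtain ⟨c, hc⟩ := hρ.exists_smul_one_eq hg
    refine ⟨c, ?_, hc.symm⟩
    rintro rfl
    exact (isUnit_glEmbed g).ne_zero (by rw [← hc, zero_smul])
  · rintro ⟨c, -, hc⟩
    rw [hc]
    exact Submodule.smul_mem _ c (one_mem_intertwiners ρ)

variable [Fintype Q₀]

theorem isOpen_setOf_isSchurPoint :
    IsOpen {ρ : ∀ α, V (s α) →L[ℂ] V (t α) | IsSchurPoint s t V ρ} := by
  obtain ⟨C, hC⟩ := Submodule.exists_isCompl (ℂ ∙ (1 : ∀ a, V a →L[ℂ] V a))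
  set K := Metric.sphere 0 1 ∩ (C : Set (∀ a, V a →L[ℂ] V a))
  have hK : IsCompact K := (isCompact_sphere 0 1).inter_right C.closed_of_finiteDimensional
  refine isOpen_iff_mem_nhds.mpr fun ρ hρ => ?_
  have hρK : ∀ f ∈ K, ∀ᶠ p in 𝓝 (ρ, f), p.2 ∉ intertwiners s t V p.1 p.1 := by
    rintro f ⟨hf1, hfC⟩
    refine ((isClosed_setOf_mem_intertwiners s t V).isOpen_compl.preimage
      (by fun_prop : Continuous fun p : (∀ α, V (s α) →L[ℂ] V (t α)) × (∀ a, V a →L[ℂ] V a) =>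
        ((p.1, p.1), p.2))).mem_nhds fun hf => ?_
    have hf0 : f = 0 :=
      Submodule.disjoint_def.mp ((isSchurPoint_iff_disjoint hC ρ).mp hρ) f hf hfC
    simp [hf0] at hf1
  filter_upwards [hK.eventually_forall_of_forall_eventually
    (P := fun σ f => f ∉ intertwiners s t V σ σ) hρK] with σ hσ
  refine (isSchurPoint_iff_disjoint hC σ).mpr (Submodule.disjoint_def.mpr fun f hf hfC => ?_)
  by_contra hf0
  exact hσ _ ⟨inv_norm_smul_mem_sphere hf0, C.smul_mem _ hfC⟩ (Submodule.smul_mem _ _ hf)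

theorem IsSchurPoint.eventually_intertwiners_subset_cone {ρ : ∀ α, V (s α) →L[ℂ] V (t α)}
    (hρ : IsSchurPoint s t V ρ) {W₁ : Set (∀ a, V a →L[ℂ] V a)} (hW₁ : IsOpen W₁)
    (h1W₁ : 1 ∈ W₁) :
    ∀ᶠ p in 𝓝 (ρ, ρ), ∀ f ∈ intertwiners s t V p.1 p.2, f ≠ 0 → f ∈ ⋃ c : ℂˣ, c • W₁ := by
  set K := Metric.sphere (0 : ∀ a, V a →L[ℂ] V a) 1 \ ⋃ c : ℂˣ, c • W₁
  have hK : IsCompact K := (isCompact_sphere 0 1).diff (isOpen_iUnion fun c => hW₁.smul c)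
  have hρK : ∀ f ∈ K, ∀ᶠ p in 𝓝 ((ρ, ρ), f), p.2 ∉ intertwiners s t V p.1.1 p.1.2 := by
    rintro f ⟨hf1, hfO⟩
    refine (isClosed_setOf_mem_intertwiners s t V).isOpen_compl.mem_nhds fun hf => hfO ?_
    obtain ⟨c, rfl⟩ := hρ.exists_smul_one_eq hf
    have hc : c ≠ 0 := by
      rintro rfl
      simp at hf1
    exact Set.mem_iUnion.mpr ⟨Units.mk0 c hc, Set.smul_mem_smul_set h1W₁⟩
  filter_upwards [hK.eventually_forall_of_forall_eventually
    (P := fun p f => f ∉ intertwiners s t V p.1 p.2) hρK] with p hp f hf hf0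
  have hfO : (‖f‖ : ℂ)⁻¹ • f ∈ ⋃ c : ℂˣ, c • W₁ := by
    by_contra hfO
    exact hp _ ⟨inv_norm_smul_mem_sphere hf0, hfO⟩ (Submodule.smul_mem _ _ hf)
  obtain ⟨c, w, hw, hwf⟩ := Set.mem_iUnion.mp hfO
  have hnf : (‖f‖ : ℂ) ≠ 0 := by simpa using hf0
  refine Set.mem_iUnion.mpr ⟨Units.mk0 _ hnf * c, w, hw, show (Units.mk0 _ hnf * c) • w = f from ?_⟩
  rw [mul_smul, show c • w = _ from hwf, Units.smul_mk0, smul_inv_smul₀ hnf]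

theorem IsSchurPoint.exists_isOpen_transporter_subset [Nontrivial (∀ a, V a →L[ℂ] V a)]
    {ρ : ∀ α, V (s α) →L[ℂ] V (t α)} (hρ : IsSchurPoint s t V ρ) {W : Set (∀ a, V a ≃ₗ[ℂ] V a)}
    (hWinv : ∀ c : ℂ, c ≠ 0 → ∀ g ∈ W, ∀ g' : ∀ a, V a ≃ₗ[ℂ] V a,
      (∀ a, (g' a).toLinearMap = c • (g a).toLinearMap) → g' ∈ W)
    (hW : ∃ W₀ ∈ 𝓝 (glEmbed V (fun a => LinearEquiv.refl ℂ (V a))),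
      {g : ∀ a, V a ≃ₗ[ℂ] V a | glEmbed V g ∈ W₀} ⊆ W) :
    ∃ U : Set (∀ α, V (s α) →L[ℂ] V (t α)),
      IsOpen U ∧ ρ ∈ U ∧ (∀ σ ∈ U, IsSchurPoint s t V σ) ∧
      ∀ g : ∀ a, V a ≃ₗ[ℂ] V a, (∃ σ ∈ U, actG s t V σ g ∈ U) → g ∈ W := by
  obtain ⟨W₀, hW₀, hW₀W⟩ := hW
  rw [glEmbed_refl] at hW₀
  obtain ⟨W₁, hW₁W₀, hW₁, h1W₁⟩ := mem_nhds_iff.mp hW₀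
  obtain ⟨U₁, hU₁, U₂, hU₂, hU₁₂⟩ :=
    mem_nhds_prod_iff.mp (hρ.eventually_intertwiners_subset_cone hW₁ h1W₁)
  obtain ⟨U, hUsub, hU, hρU⟩ := mem_nhds_iff.mp
    (Filter.inter_mem (Filter.inter_mem hU₁ hU₂) (isOpen_setOf_isSchurPoint.mem_nhds hρ))
  refine ⟨U, hU, hρU, fun σ hσ => (hUsub hσ).2, ?_⟩
  rintro g ⟨σ, hσ, hσg⟩
  have hσσg : (σ, actG s t V σ g) ∈ U₁ ×ˢ U₂ := ⟨(hUsub hσ).1.1, (hUsub hσg).1.2⟩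
  obtain ⟨c, w, hw, hwg⟩ := Set.mem_iUnion.mp <| hU₁₂ hσσg (glEmbed V g)
    (actG_eq_iff_mem_intertwiners.mp rfl) (isUnit_glEmbed g).ne_zero
  obtain ⟨g', hg'⟩ := exists_glEmbed_eq_smul g c⁻¹
  have hg'w : glEmbed V g' = w := by
    rw [hg', ← hwg]
    exact inv_smul_smul c w
  refine hWinv c c.ne_zero g' (hW₀W (hW₁W₀ (hg'w ▸ hw))) g (glEmbed_eq_smul_iff.mp ?_)
  rw [hg', ← Units.smul_def, smul_inv_smul]

end Schur

theorem schur_locus_open_and_action_principal_general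
    {Q₀ Q₁ : Type*} [Fintype Q₀]
    (s t : Q₁ → Q₀)
    (V : Q₀ → Type*) [∀ a, NormedAddCommGroup (V a)] [∀ a, InnerProductSpace ℂ (V a)]
    [∀ a, FiniteDimensional ℂ (V a)]
    (d : Q₀ → ℕ) (hd : d ≠ 0) (hdim : ∀ a, Module.finrank ℂ (V a) = d a) :
    -- (1) `ℬ` is open in `𝒜`
    IsOpen {ρ : ∀ α, V (s α) →L[ℂ] V (t α) | IsSchurPoint s t V ρ} ∧
    -- (2) the stabilizer of every point of `ℬ` equals `H`, in particular the induced
    -- action of `Ḡ = G/H` on `ℬ` is free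
    (∀ ρ : ∀ α, V (s α) →L[ℂ] V (t α), IsSchurPoint s t V ρ →
      ∀ g : ∀ a, V a ≃ₗ[ℂ] V a,
        (actG s t V ρ g = ρ ↔
          ∃ c : ℂ, c ≠ 0 ∧ ∀ a, (g a).toLinearMap = c • (LinearMap.id : V a →ₗ[ℂ] V a))) ∧
    -- (3) principality: for every `ρ ∈ ℬ` and every `H`-invariant neighbourhood `W` of
    -- the identity in `G` there is a neighbourhood `U` of `ρ` in `ℬ` with
    -- `P_G(U, U) ⊆ W`
    (∀ ρ : ∀ α, V (s α) →L[ℂ] V (t α), IsSchurPoint s t V ρ →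
      ∀ W : Set (∀ a, V a ≃ₗ[ℂ] V a),
        -- `W` is `H`-invariant
        (∀ c : ℂ, c ≠ 0 → ∀ g ∈ W, ∀ g' : ∀ a, V a ≃ₗ[ℂ] V a,
          (∀ a, (g' a).toLinearMap = c • (g a).toLinearMap) → g' ∈ W) →
        -- `W` is a neighbourhood of the identity `e` in `G` (for the topology induced
        -- from `∏ₐ (V a →L[ℂ] V a)`)
        (∃ W₀ ∈ nhds (glEmbed V (fun a => LinearEquiv.refl ℂ (V a))),
          {g : ∀ a, V a ≃ₗ[ℂ] V a | glEmbed V g ∈ W₀} ⊆ W) →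
        ∃ U : Set (∀ α, V (s α) →L[ℂ] V (t α)),
          IsOpen U ∧ ρ ∈ U ∧ (∀ σ ∈ U, IsSchurPoint s t V σ) ∧
          ∀ g : ∀ a, V a ≃ₗ[ℂ] V a, (∃ σ ∈ U, actG s t V σ g ∈ U) → g ∈ W) := by
  obtain ⟨a₀, ha₀⟩ := Function.ne_iff.mp hd
  have : Nontrivial (V a₀) := Module.finrank_pos_iff.mp (hdim a₀ ▸ Nat.pos_of_ne_zero ha₀)
  have : Nontrivial (∀ a, V a →L[ℂ] V a) := Pi.nontrivial_at a₀
  exact ⟨isOpen_setOf_isSchurPoint, fun ρ hρ => hρ.actG_eq_self_iff,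
    fun ρ hρ W hWinv hW => hρ.exists_isOpen_transporter_subset hWinv hW⟩

/-- the set `ℬ` of Schur points is open in `𝒜`; the stabilizer in `G` of
every point of `ℬ` equals `H = ℂ*·e`; and the induced action of `Ḡ = G/H` on `ℬ` is
principal: for every `ρ ∈ ℬ` and every `H`-invariant neighbourhood `W` of the identity
`e` in `G` there is a neighbourhood `U` of `ρ` in `ℬ` with `P_G(U,U) ⊆ W`. -/
theorem schur_locus_open_and_action_principal
    {Q₀ Q₁ : Type*} [Fintype Q₀] [Fintype Q₁] [Nonempty Q₀]
    (s t : Q₁ → Q₀)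
    (V : Q₀ → Type*) [∀ a, NormedAddCommGroup (V a)] [∀ a, InnerProductSpace ℂ (V a)]
    [∀ a, FiniteDimensional ℂ (V a)]
    (d : Q₀ → ℕ) (hd : d ≠ 0) (hdim : ∀ a, Module.finrank ℂ (V a) = d a) :
    -- (1) `ℬ` is open in `𝒜`
    IsOpen {ρ : ∀ α, V (s α) →L[ℂ] V (t α) | IsSchurPoint s t V ρ} ∧
    -- (2) the stabilizer of every point of `ℬ` equals `H`, in particular the induced
    -- action of `Ḡ = G/H` on `ℬ` is free
    (∀ ρ : ∀ α, V (s α) →L[ℂ] V (t α), IsSchurPoint s t V ρ →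
      ∀ g : ∀ a, V a ≃ₗ[ℂ] V a,
        (actG s t V ρ g = ρ ↔
          ∃ c : ℂ, c ≠ 0 ∧ ∀ a, (g a).toLinearMap = c • (LinearMap.id : V a →ₗ[ℂ] V a))) ∧
    -- (3) principality: for every `ρ ∈ ℬ` and every `H`-invariant neighbourhood `W` of
    -- the identity in `G` there is a neighbourhood `U` of `ρ` in `ℬ` with
    -- `P_G(U, U) ⊆ W`
    (∀ ρ : ∀ α, V (s α) →L[ℂ] V (t α), IsSchurPoint s t V ρ →
      ∀ W : Set (∀ a, V a ≃ₗ[ℂ] V a),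
        -- `W` is `H`-invariant
        (∀ c : ℂ, c ≠ 0 → ∀ g ∈ W, ∀ g' : ∀ a, V a ≃ₗ[ℂ] V a,
          (∀ a, (g' a).toLinearMap = c • (g a).toLinearMap) → g' ∈ W) →
        -- `W` is a neighbourhood of the identity `e` in `G` (for the topology induced
        -- from `∏ₐ (V a →L[ℂ] V a)`)
        (∃ W₀ ∈ nhds (glEmbed V (fun a => LinearEquiv.refl ℂ (V a))),
          {g : ∀ a, V a ≃ₗ[ℂ] V a | glEmbed V g ∈ W₀} ⊆ W) →
        ∃ U : Set (∀ α, V (s α) →L[ℂ] V (t α)),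
          IsOpen U ∧ ρ ∈ U ∧ (∀ σ ∈ U, IsSchurPoint s t V σ) ∧
          ∀ g : ∀ a, V a ≃ₗ[ℂ] V a, (∃ σ ∈ U, actG s t V σ g ∈ U) → g ∈ W) :=
  schur_locus_open_and_action_principal_general s t V d hd hdim
end
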